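/- arXiv:2402.10869 — 4 statements merged into one kernel-verified Lean document; each statement's English description precedes it below -/
import Mathlib

section
/- Let H be a real Hilbert space, r and s orthogonal (i.e., isometric linear, surjective) transformations of H, and v a unit vector such that r(v) = v and ⟨s⁻¹ ∘ rᴺ ∘ s (v), v⟩ = 0 for every positive integer N. Then ⟨s(v), v⟩ = 0. -/
/-!
The vectors `rⁿ (s v)` form an orthonormal sequence: moving the hypothesis through the isometry
`s` says `rᴺ (s v) ⊥ s v`, and `r` preserves inner products. Since `r` fixes `v`, each of them has
the same inner product `⟨s v, v⟩` with `v`, so Bessel's inequality forces that constant to vanish.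
-/

open Function

section
variable {𝕜 E : Type*} [RCLike 𝕜] [SeminormedAddCommGroup E] [InnerProductSpace 𝕜 E]

theorem Orthonormal.eq_zero_of_inner_eq_const {ι : Type*} [Infinite ι] {u : ι → E}
    (hu : Orthonormal 𝕜 u) {x : E} {c : 𝕜} (hc : ∀ i, inner 𝕜 (u i) x = c) : c = 0 := by
  have h := hu.inner_products_summable x
  simp only [hc, summable_const_iff] at h
  simpa using h

theorem LinearIsometry.inner_iterate_map_map (f : E →ₗᵢ[𝕜] E) (n : ℕ) (x y : E) :
    inner 𝕜 (f^[n] x) (f^[n] y) = inner 𝕜 x y := by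
  rw [← coe_pow, inner_map_map]

theorem LinearIsometry.orthonormal_iterate (f : E →ₗᵢ[𝕜] E) {x : E} (hx : ‖x‖ = 1)
    (h : ∀ N, 0 < N → inner 𝕜 (f^[N] x) x = 0) : Orthonormal 𝕜 fun n : ℕ => f^[n] x := by
  refine ⟨fun n => ?_, Pairwise.of_lt fun i j hij => ?_⟩
  · beta_reduce
    rw [← coe_pow, norm_map, hx]
  · obtain ⟨k, rfl⟩ := Nat.exists_eq_add_of_lt hij
    beta_reduce
    rw [add_assoc, iterate_add_apply, f.inner_iterate_map_map, inner_eq_zero_symm]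
    exact h _ k.succ_pos
end

theorem stmt1_general {H : Type*} [NormedAddCommGroup H] [InnerProductSpace ℝ H]
    (r s : H ≃ₗᵢ[ℝ] H) (v : H) (hv : ‖v‖ = 1)
    (hrv : r v = v)
    (horth : ∀ N : ℕ, 0 < N → (inner ℝ (s.symm ((⇑r)^[N] (s v))) v : ℝ) = 0) :
    (inner ℝ (s v) v : ℝ) = 0 := by
  have horbit : Orthonormal ℝ fun n : ℕ => (⇑r)^[n] (s v) :=
    r.toLinearIsometry.orthonormal_iterate (by rw [s.norm_map, hv]) fun N hN => by
      rw [real_inner_comm, s.inner_map_eq_flip, real_inner_comm]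
      exact horth N hN
  refine horbit.eq_zero_of_inner_eq_const (x := v) fun n => ?_
  calc inner ℝ ((⇑r)^[n] (s v)) v = inner ℝ ((⇑r)^[n] (s v)) ((⇑r)^[n] v) := by
        rw [iterate_fixed hrv]
    _ = inner ℝ (s v) v := r.toLinearIsometry.inner_iterate_map_map n _ _

/-- If `r, s` are orthogonal transformations of a real Hilbert space,
`v` is a unit vector fixed by `r`, and `⟨s⁻¹(rᴺ(s v)), v⟩ = 0` for every positive
integer `N`, then `⟨s v, v⟩ = 0`. -/
theorem stmt1 {H : Type*} [NormedAddCommGroup H] [InnerProductSpace ℝ H]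
    [CompleteSpace H] (r s : H ≃ₗᵢ[ℝ] H) (v : H) (hv : ‖v‖ = 1)
    (hrv : r v = v)
    (horth : ∀ N : ℕ, 0 < N → (inner ℝ (s.symm ((⇑r)^[N] (s v))) v : ℝ) = 0) :
    (inner ℝ (s v) v : ℝ) = 0 :=
  stmt1_general r s v hv hrv horth
end

section
/- Let G act by isometries on a metric space X and let Z₀ ⊆ X be countable. Then there exist a countable subgroup G₁ ≤ G and a closed separable G₁-invariant subset Y ⊆ X containing Z₀ such that for all x, y ∈ Y, inf_{g∈G₁} d(x, g·y) = inf_{g∈G} d(x, g·y). -/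
open Set

section Aux

variable {G X : Type*} [Group G] [MetricSpace X] [MulAction G X]

private lemma aux_bdd {ι : Type*} (u : ι → G) (x y : X) :
    BddBelow (Set.range fun i : ι => dist x (u i • y)) :=
  ⟨0, by rintro r ⟨i, rfl⟩; exact dist_nonneg⟩

private lemma aux_lip {ι : Type*} [Nonempty ι]
    (hiso : ∀ (g : G) (x y : X), dist (g • x) (g • y) = dist x y)
    (u : ι → G) (x x' y y' : X) :
    (⨅ i : ι, dist x (u i • y)) ≤ (⨅ i : ι, dist x' (u i • y')) + (dist x x' + dist y y') := by
  rw [← sub_le_iff_le_add]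
  refine le_ciInf fun i => ?_
  rw [sub_le_iff_le_add]
  refine (ciInf_le (aux_bdd u x y) i).trans ?_
  have h4 : dist x (u i • y) ≤ dist x x' + dist x' (u i • y') + dist (u i • y') (u i • y) :=
    dist_triangle4 _ _ _ _
  have h5 : dist (u i • y') (u i • y) = dist y y' := by rw [hiso, dist_comm]
  linarith

/-- invariance of the infimum over a subgroup. -/
private lemma aux_inv (hiso : ∀ (g : G) (x y : X), dist (g • x) (g • y) = dist x y)
    (H : Subgroup G) (h k : H) (x y : X) :
    (⨅ g : H, dist ((h : G) • x) ((g : G) • ((k : G) • y))) = ⨅ g : H, dist x ((g : G) • y) := by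
  have key : ∀ (g : H), dist ((h : G) • x) (((h * g * k⁻¹ : H) : G) • ((k : G) • y))
      = dist x ((g : G) • y) := by
    intro g
    have : ((h * g * k⁻¹ : H) : G) • ((k : G) • y) = (h : G) • ((g : G) • y) := by
      rw [smul_smul, smul_smul]
      push_cast
      group
    rw [this, hiso]
  apply le_antisymm
  · refine le_ciInf fun g => ?_
    exact (ciInf_le (aux_bdd (fun g : H => (g : G)) _ _) (h * g * k⁻¹)).trans_eq (key g)
  · refine le_ciInf fun g => ?_
    have hd : dist ((h : G) • x) ((g : G) • ((k : G) • y))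
        = dist x (((h⁻¹ * g * k : H) : G) • y) := by
      rw [smul_smul]
      have : ((g : G) * (k : G)) • y = (h : G) • (((h⁻¹ * g * k : H) : G) • y) := by
        rw [smul_smul]
        push_cast
        group
      rw [this, hiso]
    exact (ciInf_le (aux_bdd (fun g : H => (g : G)) _ _) (h⁻¹ * g * k)).trans_eq hd.symm

/-- invariance of the infimum over the whole group. -/
private lemma aux_inv_full (hiso : ∀ (g : G) (x y : X), dist (g • x) (g • y) = dist x y)
    (h k : G) (x y : X) :
    (⨅ g : G, dist (h • x) (g • (k • y))) = ⨅ g : G, dist x (g • y) := by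
  have := aux_inv hiso ⊤ ⟨h, trivial⟩ ⟨k, trivial⟩ x y
  apply le_antisymm
  · refine le_ciInf fun g => ?_
    have key : dist (h • x) ((h * g * k⁻¹) • (k • y)) = dist x (g • y) := by
      have : (h * g * k⁻¹) • (k • y) = h • (g • y) := by
        rw [smul_smul, smul_smul]; group
      rw [this, hiso]
    exact (ciInf_le (aux_bdd (id : G → G) _ _) (h * g * k⁻¹)).trans_eq key
  · refine le_ciInf fun g => ?_
    have hd : dist (h • x) (g • (k • y)) = dist x ((h⁻¹ * g * k) • y) := by
      rw [smul_smul]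
      have : (g * k) • y = h • ((h⁻¹ * g * k) • y) := by rw [smul_smul]; group
      rw [this, hiso]
    exact (ciInf_le (aux_bdd (id : G → G) _ _) (h⁻¹ * g * k)).trans_eq hd.symm

private lemma aux_countable_closure {T : Set G} (hT : T.Countable) :
    ((Subgroup.closure T : Subgroup G) : Set G).Countable := by
  have hs : (T ∪ T⁻¹).Countable := hT.union (hT.preimage inv_injective)
  haveI := hs.to_subtype
  refine Set.Countable.mono ?_
    (Set.countable_range fun l : List (T ∪ T⁻¹ : Set G) => (l.map Subtype.val).prod)
  intro x hx
  have hx' : x ∈ Submonoid.closure (T ∪ T⁻¹) := by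
    rw [← Subgroup.closure_toSubmonoid]
    exact hx
  obtain ⟨l, hl, rfl⟩ := Submonoid.exists_list_of_mem_closure hx'
  refine ⟨l.attach.map fun z => ⟨z.1, hl z.1 z.2⟩, ?_⟩
  simp [List.map_map, Function.comp_def]

end Aux

/-- If `G` acts by isometries on a metric space `X` and `Z₀ ⊆ X` is
countable, there exist a countable subgroup `G₁ ≤ G` and a closed separable
`G₁`-invariant subset `Y ⊇ Z₀` such that for all `x, y ∈ Y`,
`inf_{g∈G₁} d(x, g·y) = inf_{g∈G} d(x, g·y)`. -/
theorem stmt11 {G X : Type*} [Group G] [MetricSpace X] [MulAction G X]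
    (hiso : ∀ (g : G) (x y : X), dist (g • x) (g • y) = dist x y)
    (Z₀ : Set X) (hZ₀ : Z₀.Countable) :
    ∃ (G₁ : Subgroup G) (Y : Set X),
      (G₁ : Set G).Countable ∧ IsClosed Y ∧ TopologicalSpace.IsSeparable Y ∧
      Z₀ ⊆ Y ∧ (∀ g ∈ G₁, ∀ x ∈ Y, g • x ∈ Y) ∧
      ∀ x ∈ Y, ∀ y ∈ Y,
        (⨅ g : G₁, dist x ((g : G) • y)) = ⨅ g : G, dist x (g • y) := by
  classical
  set F : X → X → ℝ := fun x y => ⨅ g : G, dist x (g • y) with hFdef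
  -- choose near-optimal group elements
  have hchoice : ∀ (z w : X) (n : ℕ), ∃ g : G, dist z (g • w) < F z w + 1 / (n + 1) := by
    intro z w n
    have hlt : F z w < F z w + 1 / (n + 1) := by
      have : (0 : ℝ) < 1 / (n + 1) := by positivity
      linarith
    exact exists_lt_of_ciInf_lt hlt
  choose φ hφ using hchoice
  set T : Set G := (fun p : X × X × ℕ => φ p.1 p.2.1 p.2.2) '' (Z₀ ×ˢ Z₀ ×ˢ (Set.univ : Set ℕ))
    with hTdef
  have hTc : T.Countable := (hZ₀.prod (hZ₀.prod Set.countable_univ)).image _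
  set G₁ : Subgroup G := Subgroup.closure T with hG₁def
  haveI : Nonempty G₁ := ⟨1⟩
  set F₁ : X → X → ℝ := fun x y => ⨅ g : G₁, dist x ((g : G) • y) with hF₁def
  set D : Set X := Set.image2 (· • ·) (G₁ : Set G) Z₀ with hDdef
  have hDc : D.Countable := ((aux_countable_closure hTc).image2 hZ₀ _)
  refine ⟨G₁, closure D, aux_countable_closure hTc, isClosed_closure,
    (hDc.isSeparable).closure, ?_, ?_, ?_⟩
  · -- Z₀ ⊆ closure D
    intro z hz
    exact subset_closure ⟨1, Subgroup.one_mem _, z, hz, one_smul _ _⟩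
  · -- invariance of Y
    intro g hg x hx
    have hcont : Continuous fun x : X => g • x :=
      (Isometry.continuous fun a b => by rw [edist_dist, edist_dist, hiso])
    have hmap : Set.MapsTo (fun x : X => g • x) D D := by
      rintro _ ⟨h, hh, z, hz, rfl⟩
      exact ⟨g * h, G₁.mul_mem hg hh, z, hz, (smul_smul g h z).symm⟩
    exact hmap.closure hcont hx
  · -- the infima agree on Y
    intro x hx y hy
    have hge : ∀ x y : X, F x y ≤ F₁ x y := fun x y =>
      le_ciInf fun g : G₁ => ciInf_le (aux_bdd (id : G → G) x y) (g : G)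
    -- on Z₀ × Z₀
    have hZZ : ∀ z ∈ Z₀, ∀ w ∈ Z₀, F₁ z w ≤ F z w := by
      intro z hz w hw
      refine le_of_forall_pos_le_add fun ε hε => ?_
      obtain ⟨n, hn⟩ := exists_nat_one_div_lt hε
      have hmem : φ z w n ∈ G₁ :=
        Subgroup.subset_closure ⟨(z, w, n), ⟨hz, hw, trivial⟩, rfl⟩
      calc F₁ z w ≤ dist z ((⟨φ z w n, hmem⟩ : G₁) • w) :=
            ciInf_le (aux_bdd (fun g : G₁ => (g : G)) z w) ⟨φ z w n, hmem⟩
        _ = dist z (φ z w n • w) := rfl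
        _ ≤ F z w + 1 / (n + 1) := (hφ z w n).le
        _ ≤ F z w + ε := by linarith
    -- on D × D
    have hDD : ∀ x ∈ D, ∀ y ∈ D, F₁ x y ≤ F x y := by
      rintro _ ⟨h, hh, z, hz, rfl⟩ _ ⟨k, hk, w, hw, rfl⟩
      have e1 : F₁ (h • z) (k • w) = F₁ z w := by
        simpa using aux_inv hiso G₁ ⟨h, hh⟩ ⟨k, hk⟩ z w
      have e2 : F (h • z) (k • w) = F z w := aux_inv_full hiso h k z w
      rw [e1, e2]
      exact hZZ z hz w hw
    -- on closure D × closure D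
    have hle : F₁ x y ≤ F x y := by
      refine le_of_forall_pos_le_add fun ε hε => ?_
      have hε4 : 0 < ε / 4 := by linarith
      obtain ⟨x', hx'D, hxx'⟩ := Metric.mem_closure_iff.1 hx _ hε4
      obtain ⟨y', hy'D, hyy'⟩ := Metric.mem_closure_iff.1 hy _ hε4
      have l1 : F₁ x y ≤ F₁ x' y' + (dist x x' + dist y y') :=
        aux_lip hiso (fun g : G₁ => (g : G)) x x' y y'
      have l2 : F x' y' ≤ F x y + (dist x' x + dist y' y) :=
        aux_lip hiso (id : G → G) x' x y' y
      have l3 := hDD x' hx'D y' hy'D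
      rw [dist_comm x' x, dist_comm y' y] at l2
      linarith
    exact le_antisymm hle (hge x y)
end

section
/- Let Γ be a group, S a finite generating set, and let λ_Γ be the left regular representation on ℓ²(Γ). If F is a subgroup of Γ containing the finite set S, then K(λ_F, F, S) = K(λ_Γ, Γ, S), where K denotes the Kazhdan constant. -/
open scoped Classical

/-- The Kazhdan constant `K(λ_G, G, S)` of the left regular representation of a
group `G` on `ℓ²(G)` with respect to a nonempty finite set `S`:
`inf_{u ≠ 0} max_{s ∈ S} ‖λ_G(s)u − u‖ / ‖u‖`, where `(λ_G(s)u)(x) = u(s⁻¹x)`. -/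
noncomputable def kazhdanConst (G : Type*) [Group G] (S : Finset G)
    (hS : S.Nonempty) : ℝ :=
  sInf {r : ℝ | ∃ (u : lp (fun _ : G => ℝ) 2) (u' : G → lp (fun _ : G => ℝ) 2),
    u ≠ 0 ∧
    (∀ s ∈ S, ∀ x : G, (u' s : ∀ _ : G, ℝ) x = (u : ∀ _ : G, ℝ) (s⁻¹ * x)) ∧
    r = S.sup' hS fun s => ‖u' s - u‖ / ‖u‖}

noncomputable section KazhdanAux

private lemma two_toReal_pos : (0:ℝ) < (2 : ENNReal).toReal := by norm_num

private lemma nsq (x : ℝ) : ‖x‖ ^ (2 : ENNReal).toReal = x ^ 2 := by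
  have h : (2 : ENNReal).toReal = ((2:ℕ) : ℝ) := by norm_num
  rw [h, Real.rpow_natCast, Real.norm_eq_abs, sq_abs]

private lemma mem2 {α : Type*} {f : α → ℝ} :
    Memℓp f 2 ↔ Summable (fun a => f a ^ 2) := by
  rw [memℓp_gen_iff two_toReal_pos]
  simp only [nsq]

private lemma norm_sq_eq {α : Type*} (f : lp (fun _ : α => ℝ) 2) :
    ‖f‖ ^ 2 = ∑' a, (f : ∀ _ : α, ℝ) a ^ 2 := by
  have := lp.norm_rpow_eq_tsum two_toReal_pos f
  simp only [nsq] at this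
  have h2 : ‖f‖ ^ (2 : ENNReal).toReal = ‖f‖ ^ 2 := by
    have h : (2 : ENNReal).toReal = ((2:ℕ) : ℝ) := by norm_num
    rw [h, Real.rpow_natCast]
  rw [← h2, this]

private lemma norm_eq_sqrt {α : Type*} (f : lp (fun _ : α => ℝ) 2) :
    ‖f‖ = Real.sqrt (∑' a, (f : ∀ _ : α, ℝ) a ^ 2) := by
  rw [← norm_sq_eq, Real.sqrt_sq (lp.norm_nonneg' f)]

private lemma lp_exists_ne {α : Type*} {f : lp (fun _ : α => ℝ) 2} (hf : f ≠ 0) :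
    ∃ a, (f : ∀ _ : α, ℝ) a ≠ 0 := by
  by_contra h
  push_neg at h
  exact hf (lp.ext (funext fun a => h a))

private lemma mem_comp_equiv {α β : Type*} (e : α ≃ β) {f : β → ℝ} (hf : Memℓp f 2) :
    Memℓp (fun a => f (e a)) 2 := by
  rw [mem2] at hf ⊢
  exact (e.summable_iff (f := fun b => f b ^ 2)).2 hf

/-- translation operator on ℓ² of a group -/
private def transl {G : Type*} [Group G] (s : G) (u : lp (fun _ : G => ℝ) 2) :
    lp (fun _ : G => ℝ) 2 :=
  ⟨fun x => (u : ∀ _ : G, ℝ) (s⁻¹ * x), mem_comp_equiv (Equiv.mulLeft s⁻¹) (lp.memℓp u)⟩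

@[simp] private lemma transl_apply {G : Type*} [Group G] (s : G)
    (u : lp (fun _ : G => ℝ) 2) (x : G) :
    (transl s u : ∀ _ : G, ℝ) x = (u : ∀ _ : G, ℝ) (s⁻¹ * x) := rfl

end KazhdanAux
noncomputable section KazhdanAux2

variable {Γ : Type*} [Group Γ] (F : Subgroup Γ)

/-- extension by zero from a subgroup to the whole group -/
private def extF (v : F → ℝ) : Γ → ℝ := fun γ => if h : γ ∈ F then v ⟨γ, h⟩ else 0

private lemma extF_coe (v : F → ℝ) (f : F) : extF F v (f : Γ) = v f := by
  simp [extF]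

private lemma extF_of_notMem (v : F → ℝ) {γ : Γ} (h : γ ∉ F) : extF F v γ = 0 :=
  dif_neg h

private lemma tsum_extF_sq (v : F → ℝ) :
    ∑' γ : Γ, extF F v γ ^ 2 = ∑' f : F, v f ^ 2 := by
  have h := Function.Injective.tsum_eq (g := (fun f : F => (f : Γ)))
    Subtype.coe_injective (f := fun γ => extF F v γ ^ 2) ?_
  · rw [← h]
    exact tsum_congr fun f => by rw [extF_coe]
  · intro γ hγ
    by_contra hr
    have : extF F v γ = 0 := extF_of_notMem F v (fun hm => hr ⟨⟨γ, hm⟩, rfl⟩)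
    simp [Function.mem_support, this] at hγ

private lemma summable_extF_sq {v : F → ℝ} (hv : Summable fun f : F => v f ^ 2) :
    Summable fun γ : Γ => extF F v γ ^ 2 := by
  have := Function.Injective.summable_iff (g := (fun f : F => (f : Γ)))
    Subtype.coe_injective (f := fun γ => extF F v γ ^ 2) ?_
  · rw [← this]
    refine hv.congr fun f => ?_
    simp [Function.comp, extF_coe]
  · intro γ hγ
    rw [extF_of_notMem F v (fun hm => hγ ⟨⟨γ, hm⟩, rfl⟩)]
    norm_num

private lemma mem_extF (v : lp (fun _ : F => ℝ) 2) : Memℓp (extF F (v : ∀ _ : F, ℝ)) 2 :=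
  mem2.2 (summable_extF_sq F (mem2.1 (lp.memℓp v)))

private lemma norm_extF (a : lp (fun _ : F => ℝ) 2) (A : lp (fun _ : Γ => ℝ) 2)
    (hA : ∀ γ, (A : ∀ _ : Γ, ℝ) γ = extF F (a : ∀ _ : F, ℝ) γ) : ‖A‖ = ‖a‖ := by
  rw [norm_eq_sqrt, norm_eq_sqrt]
  congr 1
  rw [show (fun γ => (A : ∀ _ : Γ, ℝ) γ ^ 2) = fun γ => extF F (a : ∀ _ : F, ℝ) γ ^ 2 from
    funext fun γ => by rw [hA], tsum_extF_sq]

end KazhdanAux2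
private def lpc {α : Type*} (u : lp (fun _ : α => ℝ) 2) : α → ℝ := fun a => (u : ∀ _ : α, ℝ) a
noncomputable section Compress

variable {Γ : Type*} [Group Γ] (F : Subgroup Γ)

/-- the decomposition `Γ ≃ F × (F\Γ)` via a transversal of right cosets -/
private def cosetEquiv : F × Quotient (QuotientGroup.rightRel F) ≃ Γ where
  toFun p := (p.1 : Γ) * p.2.out
  invFun γ := (⟨γ * ((Quotient.mk (QuotientGroup.rightRel F) γ).out)⁻¹, by
      have h := Quotient.exact ((Quotient.out_eq (Quotient.mk (QuotientGroup.rightRel F) γ)))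
      exact (QuotientGroup.rightRel_apply).1 h⟩,
    Quotient.mk (QuotientGroup.rightRel F) γ)
  left_inv := by
    rintro ⟨f, q⟩
    have hq : Quotient.mk (QuotientGroup.rightRel F) ((f : Γ) * q.out) = q := by
      have : Quotient.mk (QuotientGroup.rightRel F) ((f : Γ) * q.out)
          = Quotient.mk (QuotientGroup.rightRel F) q.out := by
        exact Quotient.sound ((QuotientGroup.rightRel_apply).2 (by simpa using f.2))
      rw [this, Quotient.out_eq]
    refine Prod.ext ?_ hq
    · apply Subtype.ext
      simp [hq]
  right_inv := fun γ => by simp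

private lemma cosetEquiv_smul (s f : F) (q : Quotient (QuotientGroup.rightRel F)) :
    cosetEquiv F (s⁻¹ * f, q) = (s : Γ)⁻¹ * cosetEquiv F (f, q) := by
  simp [cosetEquiv, mul_assoc]

private lemma compress_aux {u : lp (fun _ : Γ => ℝ) 2} :
    Summable fun p : F × Quotient (QuotientGroup.rightRel F) =>
      lpc u (cosetEquiv F p) ^ 2 := by
  have h : Summable fun γ : Γ => lpc u γ ^ 2 := mem2.1 (lp.memℓp u)
  exact ((cosetEquiv F).summable_iff (f := fun γ : Γ => lpc u γ ^ 2)).2 h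

/-- the fiber vectors in `ℓ²(F\Γ)` -/
private def fiberVec (u : lp (fun _ : Γ => ℝ) 2) (f : F) :
    lp (fun _ : Quotient (QuotientGroup.rightRel F) => ℝ) 2 :=
  ⟨fun q => lpc u (cosetEquiv F (f, q)),
    mem2.2 ((compress_aux F).prod_factor f)⟩

private lemma fiberVec_apply (u : lp (fun _ : Γ => ℝ) 2) (f : F)
    (q : Quotient (QuotientGroup.rightRel F)) :
    (fiberVec F u f : ∀ _, ℝ) q = lpc u (cosetEquiv F (f, q)) := rfl

private lemma summable_fiber_norm_sq (u : lp (fun _ : Γ => ℝ) 2) :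
    Summable fun f : F => ‖fiberVec F u f‖ ^ 2 := by
  have h0 : (0 : F × Quotient (QuotientGroup.rightRel F) → ℝ) ≤ fun p =>
      lpc u (cosetEquiv F p) ^ 2 := fun p => sq_nonneg _
  have := ((summable_prod_of_nonneg h0).1 (compress_aux F)).2
  refine this.congr fun f => ?_
  rw [norm_sq_eq]
  rfl

private lemma tsum_fiber_norm_sq (u : lp (fun _ : Γ => ℝ) 2) :
    ∑' f : F, ‖fiberVec F u f‖ ^ 2 = ‖u‖ ^ 2 := by
  have h1 : ∑' f : F, ‖fiberVec F u f‖ ^ 2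
      = ∑' (f : F) (q : Quotient (QuotientGroup.rightRel F)),
          lpc u (cosetEquiv F (f, q)) ^ 2 :=
    tsum_congr fun f => by rw [norm_sq_eq]; rfl
  rw [h1, ← Summable.tsum_prod' (compress_aux F) (fun f => (compress_aux F).prod_factor f),
    norm_sq_eq]
  exact (cosetEquiv F).tsum_eq fun γ : Γ => lpc u γ ^ 2

/-- the compressed vector in `ℓ²(F)` -/
private def compVec (u : lp (fun _ : Γ => ℝ) 2) : lp (fun _ : F => ℝ) 2 :=
  ⟨fun f => ‖fiberVec F u f‖, mem2.2 (by
    refine (summable_fiber_norm_sq F u).congr fun f => rfl)⟩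

private lemma compVec_apply (u : lp (fun _ : Γ => ℝ) 2) (f : F) :
    (compVec F u : ∀ _ : F, ℝ) f = ‖fiberVec F u f‖ := rfl

private lemma norm_compVec (u : lp (fun _ : Γ => ℝ) 2) : ‖compVec F u‖ = ‖u‖ := by
  have h1 : ‖compVec F u‖ ^ 2 = ‖u‖ ^ 2 := by
    rw [norm_sq_eq]
    rw [← tsum_fiber_norm_sq F u]
    exact tsum_congr fun f => by rw [compVec_apply]
  rw [← Real.sqrt_sq (lp.norm_nonneg' (compVec F u)), ← Real.sqrt_sq (lp.norm_nonneg' u), h1]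

private lemma compVec_ne_zero {u : lp (fun _ : Γ => ℝ) 2} (hu : u ≠ 0) :
    compVec F u ≠ 0 := by
  obtain ⟨γ, hγ⟩ := lp_exists_ne hu
  obtain ⟨⟨f, q⟩, rfl⟩ := (cosetEquiv F).surjective γ
  intro h
  have h1 : (compVec F u : ∀ _ : F, ℝ) f = 0 := by rw [h]; rfl
  rw [compVec_apply, lp.norm_eq_zero_iff] at h1
  have h2 : (fiberVec F u f : ∀ _, ℝ) q = 0 := by rw [h1]; rfl
  rw [fiberVec_apply] at h2
  exact hγ h2

set_option maxHeartbeats 1000000 in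
private lemma compress_key (u : lp (fun _ : Γ => ℝ) 2) (s : F)
    (w : lp (fun _ : Γ => ℝ) 2)
    (hw : ∀ x : Γ, (w : ∀ _ : Γ, ℝ) x = (u : ∀ _ : Γ, ℝ) ((s : Γ)⁻¹ * x) - (u : ∀ _ : Γ, ℝ) x) :
    ‖transl s (compVec F u) - compVec F u‖ ≤ ‖w‖ := by
  have hfib : ∀ f : F, fiberVec F u (s⁻¹ * f) - fiberVec F u f = fiberVec F w f := by
    intro f
    apply lp.ext
    funext q
    have h1 : (cosetEquiv F) (s⁻¹ * f, q) = (s : Γ)⁻¹ * (cosetEquiv F) (f, q) :=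
      cosetEquiv_smul F s f q
    simp only [lp.coeFn_sub, Pi.sub_apply, fiberVec_apply, h1]
    exact (hw _).symm
  have hpt : ∀ f : F, ((transl s (compVec F u) - compVec F u : ∀ _ : F, ℝ) f) ^ 2
      ≤ ‖fiberVec F w f‖ ^ 2 := by
    intro f
    have h1 : (transl s (compVec F u) - compVec F u : ∀ _ : F, ℝ) f
        = ‖fiberVec F u (s⁻¹ * f)‖ - ‖fiberVec F u f‖ := rfl
    have h2 : |‖fiberVec F u (s⁻¹ * f)‖ - ‖fiberVec F u f‖| ≤ ‖fiberVec F w f‖ := by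
      rw [← hfib f]
      exact abs_norm_sub_norm_le _ _
    rw [h1, ← sq_abs]
    exact pow_le_pow_left₀ (abs_nonneg _) h2 2
  have hsumR : Summable fun f : F => ‖fiberVec F w f‖ ^ 2 := summable_fiber_norm_sq F w
  have hsumL : Summable fun f : F =>
      ((transl s (compVec F u) - compVec F u : ∀ _ : F, ℝ) f) ^ 2 :=
    Summable.of_nonneg_of_le (fun f => sq_nonneg _) hpt hsumR
  have hts : ‖transl s (compVec F u) - compVec F u‖ ^ 2 ≤ ‖w‖ ^ 2 := by
    rw [norm_sq_eq, ← tsum_fiber_norm_sq F w]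
    exact Summable.tsum_le_tsum hpt hsumL hsumR
  exact le_of_pow_le_pow_left₀ two_ne_zero (norm_nonneg _) hts

end Compress

noncomputable section Main

/-- the set whose infimum is the Kazhdan constant -/
private def KSet (G : Type*) [Group G] (S : Finset G) (hS : S.Nonempty) : Set ℝ :=
  {r : ℝ | ∃ (u : lp (fun _ : G => ℝ) 2) (u' : G → lp (fun _ : G => ℝ) 2),
    u ≠ 0 ∧
    (∀ s ∈ S, ∀ x : G, (u' s : ∀ _ : G, ℝ) x = (u : ∀ _ : G, ℝ) (s⁻¹ * x)) ∧
    r = S.sup' hS fun s => ‖u' s - u‖ / ‖u‖}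

private lemma kset_nonneg {G : Type*} [Group G] {S : Finset G} {hS : S.Nonempty} {r : ℝ}
    (hr : r ∈ KSet G S hS) : 0 ≤ r := by
  obtain ⟨u, u', hu, _, rfl⟩ := hr
  obtain ⟨s₀, hs₀⟩ := hS
  exact le_trans (div_nonneg (norm_nonneg _) (norm_nonneg _))
    (Finset.le_sup' (f := fun s => ‖u' s - u‖ / ‖u‖) hs₀)

private lemma kset_bddBelow (G : Type*) [Group G] (S : Finset G) (hS : S.Nonempty) :
    BddBelow (KSet G S hS) :=
  ⟨0, fun _ hr => kset_nonneg hr⟩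

private lemma mem_kset (G : Type*) [Group G] (S : Finset G) (hS : S.Nonempty)
    (u : lp (fun _ : G => ℝ) 2) (hu : u ≠ 0) :
    (S.sup' hS fun s => ‖transl s u - u‖ / ‖u‖) ∈ KSet G S hS :=
  ⟨u, fun s => transl s u, hu, fun _ _ _ => rfl, rfl⟩

/-- a nonzero element of ℓ²(G) -/
private def delta (G : Type*) [Group G] : lp (fun _ : G => ℝ) 2 :=
  ⟨fun x => if x = 1 then 1 else 0, mem2.2 (summable_of_ne_finset_zero (s := ({1} : Finset G))
    (fun b hb => by simp only [Finset.mem_singleton] at hb; simp [hb]))⟩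

private lemma delta_ne_zero (G : Type*) [Group G] : delta G ≠ 0 := by
  intro h
  have h1 : (delta G : ∀ _ : G, ℝ) 1 = 0 := by rw [h]; rfl
  simp [delta] at h1

end Main

private lemma kset_subset {Γ : Type*} [Group Γ] (F : Subgroup Γ) (S : Finset F)
    (hS : S.Nonempty) :
    KSet F S hS ⊆ KSet Γ (S.image (fun s : F => (s : Γ))) (hS.image _) := by
  rintro r ⟨u, u', hu, hu', rfl⟩
  set U : lp (fun _ : Γ => ℝ) 2 := ⟨extF F (u : ∀ _ : F, ℝ), mem_extF F u⟩ with hU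
  have hUcoe : ∀ γ, (U : ∀ _ : Γ, ℝ) γ = extF F (u : ∀ _ : F, ℝ) γ := fun γ => rfl
  refine ⟨U, fun t => transl t U, ?_, fun t _ x => rfl, ?_⟩
  · intro h
    obtain ⟨f, hf⟩ := lp_exists_ne hu
    have h0 : (U : ∀ _ : Γ, ℝ) (f : Γ) = 0 := by rw [h]; rfl
    rw [hUcoe, extF_coe] at h0
    exact hf h0
  · rw [Finset.sup'_image]
    refine Finset.sup'_congr hS rfl fun s hs => ?_
    have hnU : ‖U‖ = ‖u‖ := norm_extF F u U hUcoe
    have hn2 : ‖transl ((s : Γ)) U - U‖ = ‖u' s - u‖ := by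
      refine norm_extF F (u' s - u) _ fun γ => ?_
      simp only [lp.coeFn_sub, Pi.sub_apply]
      show extF F (u : ∀ _ : F, ℝ) ((s : Γ)⁻¹ * γ) - extF F (u : ∀ _ : F, ℝ) γ
          = extF F ((u' s - u : lp (fun _ : F => ℝ) 2) : ∀ _ : F, ℝ) γ
      by_cases h : γ ∈ F
      · have h2 : (s : Γ)⁻¹ * γ ∈ F := F.mul_mem (F.inv_mem s.2) h
        simp only [extF, dif_pos h, dif_pos h2, lp.coeFn_sub, Pi.sub_apply]
        rw [hu' s hs]
        rfl
      · have h2 : (s : Γ)⁻¹ * γ ∉ F := fun hm => h (by simpa using F.mul_mem s.2 hm)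
        rw [extF_of_notMem F _ h2, extF_of_notMem F _ h, extF_of_notMem F _ h]
        simp
    show ‖u' s - u‖ / ‖u‖ = ‖transl ((s : Γ)) U - U‖ / ‖U‖
    rw [hn2, hnU]

private lemma kazhdanConst_eq_sInf_kset (G : Type*) [Group G] (S : Finset G)
    (hS : S.Nonempty) : kazhdanConst G S hS = sInf (KSet G S hS) := rfl

/-- if `F` is a subgroup of `Γ` containing the finite set `S`, then
`K(λ_F, F, S) = K(λ_Γ, Γ, S)`. -/
theorem stmt15 {Γ : Type*} [Group Γ] (F : Subgroup Γ) (S : Finset F)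
    (hS : S.Nonempty) :
    kazhdanConst F S hS =
      kazhdanConst Γ (S.image (fun s : F => (s : Γ))) (hS.image _) := by
  rw [kazhdanConst_eq_sInf_kset, kazhdanConst_eq_sInf_kset]
  have hsub := kset_subset F S hS
  have hneF : (KSet F S hS).Nonempty :=
    ⟨_, mem_kset F S hS (delta F) (delta_ne_zero F)⟩
  have hneG : (KSet Γ (S.image (fun s : F => (s : Γ))) (hS.image _)).Nonempty :=
    hneF.mono hsub
  apply le_antisymm
  · refine le_csInf hneG ?_
    rintro r ⟨u, u', hu, hu', rfl⟩
    have hV0 : compVec F u ≠ 0 := compVec_ne_zero F hu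
    have hmem := mem_kset F S hS (compVec F u) hV0
    refine le_trans (csInf_le (kset_bddBelow F S hS) hmem) ?_
    refine Finset.sup'_le hS _ fun s hsS => ?_
    have hsT : (s : Γ) ∈ S.image (fun s : F => (s : Γ)) := Finset.mem_image_of_mem _ hsS
    have hw : ∀ x : Γ, ((u' (s : Γ) - u : lp (fun _ : Γ => ℝ) 2) : ∀ _ : Γ, ℝ) x
        = (u : ∀ _ : Γ, ℝ) ((s : Γ)⁻¹ * x) - (u : ∀ _ : Γ, ℝ) x := by
      intro x
      simp only [lp.coeFn_sub, Pi.sub_apply, hu' (s : Γ) hsT x]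
    have hkey := compress_key F u s (u' (s : Γ) - u) hw
    have hu0 : ‖u‖ ≠ 0 := fun h0 => hu (lp.norm_eq_zero_iff.1 h0)
    have hVpos : 0 < ‖compVec F u‖ := by
      rw [norm_compVec]
      exact (lp.norm_nonneg' u).lt_of_ne (Ne.symm hu0)
    calc ‖transl s (compVec F u) - compVec F u‖ / ‖compVec F u‖
        ≤ ‖u' (s : Γ) - u‖ / ‖compVec F u‖ := by gcongr
      _ = ‖u' (s : Γ) - u‖ / ‖u‖ := by rw [norm_compVec]
      _ ≤ _ := Finset.le_sup' (f := fun t => ‖u' t - u‖ / ‖u‖) hsT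
  · exact csInf_le_csInf (kset_bddBelow Γ _ _) hneF hsub
end

section
/- Let Γ be a group whose maximal abelian subgroups are malnormal, and let ω be a non-principal ultrafilter on ℕ. Then every maximal abelian subgroup of the ultraproduct Γ_ω = (∏ Γ)/ω is malnormal in Γ_ω. -/
open Filter

/-- The kernel of the ultraproduct construction: sequences in `Γ` that are trivial
`ω`-almost everywhere. -/
def ultraKer (Γ : Type*) [Group Γ] (ω : Ultrafilter ℕ) : Subgroup (ℕ → Γ) where
  carrier := {f | ∀ᶠ j in (ω : Filter ℕ), f j = 1}
  one_mem' := Eventually.of_forall fun _ => rfl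
  mul_mem' := by
    intro a b ha hb
    filter_upwards [ha, hb] with j h1 h2
    simp [h1, h2]
  inv_mem' := by
    intro a ha
    filter_upwards [ha] with j h1
    simp [h1]

instance ultraKer_normal (Γ : Type*) [Group Γ] (ω : Ultrafilter ℕ) :
    (ultraKer Γ ω).Normal := by
  constructor
  intro f hf g
  filter_upwards [hf] with j h1
  simp [ultraKer, h1]

/-- The ultraproduct `Γ_ω = (∏_j Γ)/ω`. -/
abbrev Ultraproduct (Γ : Type*) [Group Γ] (ω : Ultrafilter ℕ) : Type _ :=
  (ℕ → Γ) ⧸ ultraKer Γ ω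

/-- A subgroup `A ≤ G` is malnormal if `g⁻¹Ag ∩ A = {1}` for every `g ∉ A`. -/
def Malnormal {G : Type*} [Group G] (A : Subgroup G) : Prop :=
  ∀ g : G, g ∉ A → ∀ x ∈ A, g⁻¹ * x * g ∈ A → x = 1

/-- A subgroup is maximal abelian if it is abelian and not properly contained in
any abelian subgroup. -/
def IsMaxAbelian {G : Type*} [Group G] (A : Subgroup G) : Prop :=
  (∀ x ∈ A, ∀ y ∈ A, x * y = y * x) ∧
    ∀ B : Subgroup G, A ≤ B → (∀ x ∈ B, ∀ y ∈ B, x * y = y * x) → B = A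

section Aux
open Subgroup

variable {G : Type*} [Group G]

/-- The closure of a set of pairwise commuting elements is abelian. -/
lemma closure_comm {S : Set G} (hS : ∀ a ∈ S, ∀ b ∈ S, a * b = b * a) :
    ∀ x ∈ closure S, ∀ y ∈ closure S, x * y = y * x := by
  have h1 : ∀ w ∈ S, closure S ≤ centralizer {w} := by
    intro w hw
    rw [closure_le]
    intro z hz
    rw [SetLike.mem_coe, mem_centralizer_iff]
    rintro t rfl
    exact hS t hw z hz
  have h2 : closure S ≤ centralizer (closure S : Set G) := by
    rw [closure_le]
    intro w hw
    rw [SetLike.mem_coe, mem_centralizer_iff]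
    intro z hz
    exact ((mem_centralizer_iff).mp (h1 w hw hz) w (Set.mem_singleton _)).symm
  intro x hx y hy
  exact (mem_centralizer_iff).mp (h2 hy) x hx

/-- A subgroup generated by two commuting elements is abelian. -/
lemma closure_pair_abelian {u v : G} (h : u * v = v * u) :
    ∀ x ∈ closure ({u, v} : Set G), ∀ y ∈ closure ({u, v} : Set G), x * y = y * x :=
  closure_comm (by rintro a (rfl | rfl) b (rfl | rfl) <;> first | rfl | exact h | exact h.symm)

/-- Every abelian subgroup is contained in a maximal abelian subgroup. -/
lemma exists_maxAbelian (H : Subgroup G)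
    (hH : ∀ x ∈ H, ∀ y ∈ H, x * y = y * x) :
    ∃ M : Subgroup G, IsMaxAbelian M ∧ H ≤ M := by
  have hzorn : ∀ c ⊆ {B : Subgroup G | ∀ x ∈ B, ∀ y ∈ B, x * y = y * x},
      IsChain (· ≤ ·) c → ∀ y ∈ c,
      ∃ ub ∈ {B : Subgroup G | ∀ x ∈ B, ∀ y ∈ B, x * y = y * x}, ∀ z ∈ c, z ≤ ub := by
    intro c hc hchain y hy
    refine ⟨sSup c, ?_, fun z hz => le_sSup hz⟩
    intro a ha b hb
    rw [mem_sSup_of_directedOn ⟨y, hy⟩ hchain.directedOn] at ha hb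
    obtain ⟨A, hA, haA⟩ := ha
    obtain ⟨B, hB, hbB⟩ := hb
    rcases hchain.total hA hB with hAB | hBA
    · exact hc hB a (hAB haA) b hbB
    · exact hc hA a haA b (hBA hbB)
  obtain ⟨M, hHM, hMmax⟩ := zorn_le_nonempty₀
    {B : Subgroup G | ∀ x ∈ B, ∀ y ∈ B, x * y = y * x} hzorn H hH
  exact ⟨M, ⟨hMmax.prop, fun B hMB hB => le_antisymm (hMmax.2 hB hMB) hMB⟩, hHM⟩

variable (hmal : ∀ A : Subgroup G, IsMaxAbelian A → Malnormal A)
include hmal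

/-- Commutative transitivity. -/
lemma CT_of_mal {a b c : G} (hb : b ≠ 1) (hab : a * b = b * a) (hcb : c * b = b * c) :
    a * c = c * a := by
  obtain ⟨M, hM, hle⟩ := exists_maxAbelian (closure {b, a}) (closure_pair_abelian hab.symm)
  have hbM : b ∈ M := hle (subset_closure (by simp))
  have haM : a ∈ M := hle (subset_closure (by simp))
  by_cases hcM : c ∈ M
  · exact hM.1 a haM c hcM
  · have hcbc : c⁻¹ * b * c = b := by
      rw [mul_assoc, ← hcb, ← mul_assoc, inv_mul_cancel, one_mul]
    exact absurd (hmal M hM c hcM b hbM (by rw [hcbc]; exact hbM)) hb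

/-- The key CSA identity. -/
lemma csa_of_mal {x y : G} (h : x * (y * x * y⁻¹) = (y * x * y⁻¹) * x) :
    x * y = y * x := by
  rcases eq_or_ne x 1 with rfl | hx
  · simp
  obtain ⟨M, hM, hle⟩ := exists_maxAbelian (closure {x, y * x * y⁻¹})
    (closure_pair_abelian h)
  have hxM : x ∈ M := hle (subset_closure (by simp))
  have hzM : y * x * y⁻¹ ∈ M := hle (subset_closure (by simp))
  by_cases hyM : y⁻¹ ∈ M
  · have hc : Commute x y⁻¹ := hM.1 x hxM y⁻¹ hyM
    have := hc.inv_right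
    rwa [inv_inv] at this
  · exact absurd (hmal M hM y⁻¹ hyM x hxM (by simpa using hzM)) hx

end Aux

section Lift

variable {Γ : Type*} [Group Γ] {ω : Ultrafilter ℕ}

lemma mk_eq_mk {f g : ℕ → Γ} :
    (QuotientGroup.mk f : Ultraproduct Γ ω) = QuotientGroup.mk g ↔
      ∀ᶠ j in (ω : Filter ℕ), f j = g j := by
  rw [QuotientGroup.eq]
  have : f⁻¹ * g ∈ ultraKer Γ ω ↔ ∀ᶠ j in (ω : Filter ℕ), (f j)⁻¹ * g j = 1 := Iff.rfl
  rw [this]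
  constructor <;> intro h <;> filter_upwards [h] with j hj
  · exact inv_mul_eq_one.mp hj
  · show (f j)⁻¹ * g j = 1
    simp [hj]

end Lift

/-- if every maximal abelian subgroup of `Γ` is malnormal and `ω` is a
non-principal ultrafilter on `ℕ`, then every maximal abelian subgroup of the
ultraproduct `Γ_ω` is malnormal. -/
theorem stmt17 {Γ : Type*} [Group Γ] (ω : Ultrafilter ℕ)
    (hω : ∀ j : ℕ, ω ≠ pure j)
    (hmal : ∀ A : Subgroup Γ, IsMaxAbelian A → Malnormal A) :
    ∀ B : Subgroup (Ultraproduct Γ ω), IsMaxAbelian B → Malnormal B := by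
  -- the CSA identity lifts to the ultraproduct
  have csaω : ∀ x y : Ultraproduct Γ ω,
      x * (y * x * y⁻¹) = (y * x * y⁻¹) * x → x * y = y * x := by
    intro x y
    refine QuotientGroup.induction_on x fun f => QuotientGroup.induction_on y fun g => ?_
    intro h
    have h' : (QuotientGroup.mk (f * (g * f * g⁻¹)) : Ultraproduct Γ ω) =
        QuotientGroup.mk ((g * f * g⁻¹) * f) := by
      simpa using h
    rw [mk_eq_mk] at h'
    show (QuotientGroup.mk (f * g) : Ultraproduct Γ ω) = QuotientGroup.mk (g * f)
    rw [mk_eq_mk]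
    filter_upwards [h'] with j hj
    simpa using csa_of_mal hmal (by simpa using hj)
  -- commutative transitivity lifts to the ultraproduct
  have ctω : ∀ a b c : Ultraproduct Γ ω, b ≠ 1 →
      a * b = b * a → c * b = b * c → a * c = c * a := by
    intro a b c
    refine QuotientGroup.induction_on a fun fa => QuotientGroup.induction_on b fun fb =>
      QuotientGroup.induction_on c fun fc => ?_
    intro hb hab hcb
    have hb' : ∀ᶠ j in (ω : Filter ℕ), fb j ≠ 1 := by
      rw [Ultrafilter.eventually_not]
      intro hcon
      apply hb
      show (QuotientGroup.mk fb : Ultraproduct Γ ω) = QuotientGroup.mk 1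
      rw [mk_eq_mk]
      filter_upwards [hcon] with j hj using hj
    have hab' : ∀ᶠ j in (ω : Filter ℕ), fa j * fb j = fb j * fa j := by
      have : (QuotientGroup.mk (fa * fb) : Ultraproduct Γ ω) = QuotientGroup.mk (fb * fa) := by
        simpa using hab
      rw [mk_eq_mk] at this
      filter_upwards [this] with j hj using by simpa using hj
    have hcb' : ∀ᶠ j in (ω : Filter ℕ), fc j * fb j = fb j * fc j := by
      have : (QuotientGroup.mk (fc * fb) : Ultraproduct Γ ω) = QuotientGroup.mk (fb * fc) := by
        simpa using hcb
      rw [mk_eq_mk] at this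
      filter_upwards [this] with j hj using by simpa using hj
    show (QuotientGroup.mk (fa * fc) : Ultraproduct Γ ω) = QuotientGroup.mk (fc * fa)
    rw [mk_eq_mk]
    filter_upwards [hb', hab', hcb'] with j h1 h2 h3
    simpa using CT_of_mal hmal h1 h2 h3
  -- now the pure group-theoretic argument in the ultraproduct
  intro B hB g hg x hx hconj
  by_contra hx1
  -- x commutes with g⁻¹ * x * g since both lie in the abelian subgroup B
  have hcomm : x * (g⁻¹ * x * (g⁻¹)⁻¹) = (g⁻¹ * x * (g⁻¹)⁻¹) * x := by
    rw [inv_inv]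
    exact hB.1 x hx (g⁻¹ * x * g) hconj
  have hxg : x * g = g * x := by
    have h1 : Commute x g⁻¹ := csaω x g⁻¹ hcomm
    have := h1.inv_right
    rwa [inv_inv] at this
  -- the centralizer of x is abelian and contains B, hence equals B
  have hBC : B ≤ Subgroup.centralizer {x} := by
    intro b hb
    rw [Subgroup.mem_centralizer_iff]
    rintro h rfl
    exact hB.1 h hx b hb
  have hCab : ∀ a ∈ Subgroup.centralizer {x}, ∀ c ∈ Subgroup.centralizer {x},
      a * c = c * a := by
    intro a ha c hc
    rw [Subgroup.mem_centralizer_iff] at ha hc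
    exact ctω a x c hx1 (ha x rfl).symm (hc x rfl).symm
  have hCB : Subgroup.centralizer {x} = B := hB.2 _ hBC hCab
  have : g ∈ Subgroup.centralizer {x} := by
    rw [Subgroup.mem_centralizer_iff]
    rintro h rfl
    exact hxg
  rw [hCB] at this
  exact hg this
end
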